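/- For every integer n ≥ 8, the product of the first n primes satisfies p_1 · p_2 · ⋯ · p_n > p_{n+1}^5. -/

import Mathlib

/-!
Bertrand's postulate gives `p_{n+1} ≤ 2 p_n`, hence `p_{n+1}^5 ≤ 32 p_n^5 ≤ p_n^6` once `p_n ≥ 32`,
and a direct check covers `p_n ∈ {23, 29, 31}`. So multiplying the product by the next factor `p_n`
preserves the inequality, and induction from `2 · 3 · ⋯ · 19 = 9699690 > 23^5` proves the claim.
-/

open Finset

namespace Nat

theorem nth_prime_five_eq_thirteen : nth Prime 5 = 13 := nth_count (by norm_num : Prime 13)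

theorem nth_prime_six_eq_seventeen : nth Prime 6 = 17 := nth_count (by norm_num : Prime 17)

theorem nth_prime_seven_eq_nineteen : nth Prime 7 = 19 := nth_count (by norm_num : Prime 19)

theorem nth_prime_eight_eq_twenty_three : nth Prime 8 = 23 := nth_count (by norm_num : Prime 23)

theorem nth_prime_nine_eq_twenty_nine : nth Prime 9 = 29 := nth_count (by norm_num : Prime 29)

theorem nth_prime_ten_eq_thirty_one : nth Prime 10 = 31 := nth_count (by norm_num : Prime 31)

theorem nth_prime_eleven_eq_thirty_seven : nth Prime 11 = 37 := nth_count (by norm_num : Prime 37)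

theorem nth_prime_succ_le_two_mul (n : ℕ) : nth Prime (n + 1) ≤ 2 * nth Prime n := by
  obtain ⟨q, hq, hnq, hq2⟩ :=
    exists_prime_lt_and_le_two_mul (nth Prime n) (prime_nth_prime n).ne_zero
  have hsucc_le : nth Prime (n + 1) ≤ q :=
    le_of_not_gt fun h => (le_nth_of_lt_nth_succ h hq).not_gt hnq
  exact hsucc_le.trans hq2

theorem nth_prime_succ_pow_le_pow_succ {k n : ℕ} (h : 2 ^ k ≤ nth Prime n) :
    nth Prime (n + 1) ^ k ≤ nth Prime n ^ (k + 1) :=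
  calc nth Prime (n + 1) ^ k
      ≤ (2 * nth Prime n) ^ k := Nat.pow_le_pow_left (nth_prime_succ_le_two_mul n) k
    _ = 2 ^ k * nth Prime n ^ k := Nat.mul_pow 2 _ k
    _ ≤ nth Prime n * nth Prime n ^ k := Nat.mul_le_mul_right _ h
    _ = nth Prime n ^ (k + 1) := (Nat.pow_succ' ..).symm

theorem nth_prime_succ_pow_five_le_pow_six {n : ℕ} (hn : 8 ≤ n) :
    nth Prime (n + 1) ^ 5 ≤ nth Prime n ^ 6 := by
  rcases Nat.lt_or_ge n 11 with hn11 | hn11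
  · interval_cases n <;>
      norm_num [nth_prime_eight_eq_twenty_three, nth_prime_nine_eq_twenty_nine,
        nth_prime_ten_eq_thirty_one, nth_prime_eleven_eq_thirty_seven]
  · apply nth_prime_succ_pow_le_pow_succ
    calc 2 ^ 5 ≤ nth Prime 11 := by rw [nth_prime_eleven_eq_thirty_seven]; norm_num
      _ ≤ nth Prime n := (nth_le_nth infinite_setOfPred_prime).2 hn11

end Nat

/-- For every integer n ≥ 8, p_1 ⋯ p_n > p_{n+1}^5. -/
theorem stmt_11 (n : ℕ) (hn : 8 ≤ n) :
    (∏ i ∈ Finset.range n, Nat.nth Nat.Prime i) > (Nat.nth Nat.Prime n) ^ 5 := by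
  induction n, hn using Nat.le_induction with
  | base =>
    simp [prod_range_succ, Nat.nth_prime_five_eq_thirteen, Nat.nth_prime_six_eq_seventeen,
      Nat.nth_prime_seven_eq_nineteen, Nat.nth_prime_eight_eq_twenty_three]
  | succ n hn ih =>
    have hpos : 0 < Nat.nth Nat.Prime n := (Nat.prime_nth_prime n).pos
    calc Nat.nth Nat.Prime (n + 1) ^ 5
        ≤ Nat.nth Nat.Prime n ^ 6 := Nat.nth_prime_succ_pow_five_le_pow_six hn
      _ = Nat.nth Nat.Prime n ^ 5 * Nat.nth Nat.Prime n := Nat.pow_succ ..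
      _ < (∏ i ∈ range n, Nat.nth Nat.Prime i) * Nat.nth Nat.Prime n :=
        Nat.mul_lt_mul_of_pos_right ih hpos
      _ = ∏ i ∈ range (n + 1), Nat.nth Nat.Prime i := (prod_range_succ ..).symm
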